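/- arXiv:1503.02794 — 2 statements merged into one kernel-verified Lean document; each statement's English description precedes it below -/
import Mathlib

section
/- There exists a constant C' > 0 such that for all integers d ≥ 2, all T ≥ 2, and all nonzero k ∈ Z^d, ∫_{S^{d-1}} |∫_0^T e^{2πi t (k·ξ)} dt|² dξ ≤ C' T / ‖k‖. -/
/-!
Pointwise, `‖∫₀ᵀ e^{2πita} dt‖ ≤ min (T, 1/(π|a|))`, so `‖∫₀ᵀ e^{2πit⟪k,ξ⟫} dt‖² > t` forces
`|⟪k, ξ⟫| ≤ 1/(π√t)`. The surface measure of a slab `{ξ ∈ S^{d-1} : |⟪k, ξ⟫| ≤ s}` is at most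
`4000 s/‖k‖`, uniformly in `d`: it is `d` times the volume of the cone over the slab, which after a
reflection lies in `[-s/‖k‖, s/‖k‖] × B^{d-1}`, and `d · vol(B^{d-1})` is bounded. The layer-cake
formula then bounds the integral by `∫₀^{T²} 4000/(π‖k‖√t) dt = 8000 T/(π‖k‖)`.
-/

open MeasureTheory Real Metric
open scoped ENNReal Pointwise InnerProductSpace

local notation "𝔼" n:max => EuclideanSpace ℝ (Fin n)

lemma sqrt_pi_div_two_le_Gamma_half_add_one (m : ℕ) : √π / 2 ≤ Gamma (m / 2 + 1) := by
  induction m using Nat.twoStepInduction with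
  | zero =>
    have : √π ≤ 2 := by rw [sqrt_le_left (by norm_num)]; linarith [pi_le_four]
    simp only [CharP.cast_eq_zero, zero_div, zero_add, Gamma_one]
    linarith
  | one =>
    rw [Nat.cast_one, Gamma_add_one (by norm_num), Gamma_one_half_eq]
    linarith [sqrt_nonneg π]
  | more m ih _ =>
    have hrec : Gamma ((m + 2 : ℕ) / 2 + 1) = (m / 2 + 1) * Gamma (m / 2 + 1) := by
      rw [← Gamma_add_one (by positivity)]
      push_cast
      ring_nf
    rw [hrec]
    nlinarith [sqrt_nonneg π, (Nat.cast_nonneg m : (0 : ℝ) ≤ m)]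

lemma succ_mul_sqrt_pi_pow_div_Gamma_le (m : ℕ) :
    (m + 1) * (√π ^ m / Gamma (m / 2 + 1)) ≤ 2000 := by
  induction m using Nat.strong_induction_on with
  | _ m ih =>
  rcases le_or_gt m 8 with hm | hm
  · have hsqrt : √π ≤ 1.8 := by rw [sqrt_le_left (by norm_num)]; linarith [pi_lt_d2]
    have hG : 0.85 ≤ Gamma (m / 2 + 1) := by
      have : 1.7 ≤ √π := by rw [le_sqrt (by norm_num) pi_pos.le]; linarith [pi_gt_three]
      linarith [sqrt_pi_div_two_le_Gamma_half_add_one m]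
    have hm' : (m : ℝ) ≤ 8 := by exact_mod_cast hm
    calc (m + 1) * (√π ^ m / Gamma (m / 2 + 1)) ≤ 9 * (1.8 ^ 8 / 0.85) := by
          gcongr
          · linarith
          · exact (pow_le_pow_left₀ (sqrt_nonneg π) hsqrt m).trans
              (pow_le_pow_right₀ (by norm_num) hm)
      _ ≤ 2000 := by norm_num
  · obtain ⟨m, rfl⟩ : ∃ k, m = k + 2 := ⟨m - 2, by omega⟩
    have hm7 : (7 : ℝ) ≤ m := by exact_mod_cast (by omega : 7 ≤ m)
    have hG : 0 < Gamma (m / 2 + 1) := Gamma_pos_of_pos (by positivity)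
    have hrec : Gamma ((m + 2 : ℕ) / 2 + 1) = (m / 2 + 1) * Gamma (m / 2 + 1) := by
      rw [← Gamma_add_one (by positivity)]
      push_cast
      ring_nf
    have hpow : √π ^ (m + 2) = π * √π ^ m := by
      rw [pow_add, sq_sqrt pi_pos.le]; ring
    -- `(m + 1) √π ^ m / Γ(m/2 + 1)` decreases along `m ↦ m + 2` as soon as this holds
    have hstep : 2 * π * (m + 3) ≤ (m + 1) * (m + 2) := by nlinarith [pi_lt_d2]
    refine le_trans ?_ (ih m (by omega))
    rw [hrec, hpow, mul_div_mul_comm, ← mul_assoc]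
    gcongr
    rw [mul_div_assoc', div_le_iff₀ (by positivity)]
    push_cast
    linarith

lemma add_two_mul_volume_ball_le (n : ℕ) :
    (n + 2 : ℝ≥0∞) * volume (ball (0 : 𝔼 (n + 1)) 1) ≤ 2000 := by
  rw [EuclideanSpace.volume_ball, Fintype.card_fin, ENNReal.ofReal_one, one_pow, one_mul,
    show (n + 2 : ℝ≥0∞) = ENNReal.ofReal ((n + 1 : ℕ) + 1) by norm_cast,
    ← ENNReal.ofReal_mul (by positivity)]
  exact ENNReal.ofReal_le_of_le_toReal (by simpa using succ_mul_sqrt_pi_pow_div_Gamma_le (n + 1))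

lemma volume_setOf_abs_zero_le_and_norm_lt_one_le (n : ℕ) (s : ℝ) :
    volume {x : 𝔼 (n + 1) | |x 0| ≤ s ∧ ‖x‖ < 1}
      ≤ ENNReal.ofReal (2 * s) * volume (ball (0 : 𝔼 n) 1) := by
  have htoLp := (EuclideanSpace.volume_preserving_symm_measurableEquiv_toLp (Fin (n + 1))).symm
  have hsplit := volume_preserving_piFinSuccAbove (fun _ : Fin (n + 1) => ℝ) 0
  have hball : MeasurableSet (WithLp.toLp 2 ⁻¹' ball (0 : 𝔼 n) 1) :=
    measurableSet_ball.preimage (WithLp.measurable_toLp 2 _)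
  have hsub : WithLp.toLp 2 ⁻¹' {x : 𝔼 (n + 1) | |x 0| ≤ s ∧ ‖x‖ < 1}
      ⊆ MeasurableEquiv.piFinSuccAbove (fun _ => ℝ) 0 ⁻¹'
        (Set.Icc (-s) s ×ˢ (WithLp.toLp 2 ⁻¹' ball (0 : 𝔼 n) 1)) := by
    rintro y ⟨hy0, hy⟩
    refine ⟨abs_le.mp hy0, ?_⟩
    simp only [Set.mem_preimage, mem_ball_zero_iff, MeasurableEquiv.piFinSuccAbove_apply] at hy ⊢
    refine lt_of_le_of_lt ?_ hy
    rw [EuclideanSpace.norm_eq, EuclideanSpace.norm_eq, Fin.sum_univ_succ]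
    gcongr
    simpa [Fin.tail] using sq_nonneg (y 0)
  calc volume {x : 𝔼 (n + 1) | |x 0| ≤ s ∧ ‖x‖ < 1}
      = volume (WithLp.toLp 2 ⁻¹' {x : 𝔼 (n + 1) | |x 0| ≤ s ∧ ‖x‖ < 1}) :=
        (htoLp.measure_preimage_equiv _).symm
    _ ≤ volume (Set.Icc (-s) s) * volume (WithLp.toLp 2 ⁻¹' ball (0 : 𝔼 n) 1) := by
        refine (measure_mono hsub).trans_eq ?_
        rw [hsplit.measure_preimage (measurableSet_Icc.prod hball).nullMeasurableSet]
        exact Measure.prod_prod _ _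
    _ = ENNReal.ofReal (2 * s) * volume (ball (0 : 𝔼 n) 1) := by
        rw [Real.volume_Icc, (PiLp.volume_preserving_toLp (Fin n)).measure_preimage
          measurableSet_ball.nullMeasurableSet]
        ring_nf

lemma toSphere_setOf_abs_inner_le_le_volume (n : ℕ) {w : 𝔼 (n + 1)} (hw : w ≠ 0) (s : ℝ) :
    (volume : Measure (𝔼 (n + 1))).toSphere
        {ξ : sphere (0 : 𝔼 (n + 1)) 1 | |⟪w, (ξ : 𝔼 (n + 1))⟫_ℝ| ≤ s}
      ≤ (n + 1 : ℝ≥0∞) * volume {x : 𝔼 (n + 1) | |x 0| ≤ s / ‖w‖ ∧ ‖x‖ < 1} := by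
  set A := {ξ : sphere (0 : 𝔼 (n + 1)) 1 | |⟪w, (ξ : 𝔼 (n + 1))⟫_ℝ| ≤ s}
  set W := {x : 𝔼 (n + 1) | |x 0| ≤ s / ‖w‖ ∧ ‖x‖ < 1}
  have hw0 : 0 < ‖w‖ := norm_pos_iff.mpr hw
  have hA : MeasurableSet A := measurableSet_le (by fun_prop) measurable_const
  have hW : MeasurableSet W :=
    (measurableSet_le (by fun_prop : Continuous fun x : 𝔼 (n + 1) => |x 0|).measurable
      measurable_const).inter (measurableSet_lt measurable_norm measurable_const)
  set e₀ := EuclideanSpace.single (0 : Fin (n + 1)) (1 : ℝ)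
  set R := Submodule.reflection (ℝ ∙ (w - ‖w‖ • e₀))ᗮ
  have hR : R w = ‖w‖ • e₀ := Submodule.reflection_sub (by simp [e₀, norm_smul])
  have hcone : Set.Ioo (0 : ℝ) 1 • (Subtype.val '' A) ⊆ R ⁻¹' W := by
    rintro _ ⟨c, ⟨hc0, hc1⟩, _, ⟨ξ, hξ, rfl⟩, rfl⟩
    have hcoord : ‖w‖ * R (c • (ξ : 𝔼 (n + 1))) 0 = c * ⟪w, (ξ : 𝔼 (n + 1))⟫_ℝ := by
      rw [← real_inner_smul_right, ← R.inner_map_map, hR, real_inner_smul_left,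
        EuclideanSpace.inner_single_left]
      simp
    refine ⟨?_, ?_⟩
    · rw [le_div_iff₀ hw0, mul_comm, ← abs_of_pos hw0, ← abs_mul, hcoord, abs_mul,
        abs_of_pos hc0]
      have hξ' : |⟪w, (ξ : 𝔼 (n + 1))⟫_ℝ| ≤ s := hξ
      nlinarith [abs_nonneg ⟪w, (ξ : 𝔼 (n + 1))⟫_ℝ]
    · simp [R.norm_map, norm_smul, abs_of_pos hc0, hc1]
  calc (volume : Measure (𝔼 (n + 1))).toSphere A
      = (n + 1 : ℝ≥0∞) * volume (Set.Ioo (0 : ℝ) 1 • (Subtype.val '' A)) := by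
        rw [Measure.toSphere_apply' _ hA, finrank_euclideanSpace_fin]; push_cast; rfl
    _ ≤ (n + 1 : ℝ≥0∞) * volume W := by
        grw [measure_mono hcone, R.measurePreserving.measure_preimage hW.nullMeasurableSet]

lemma toSphere_setOf_abs_inner_le_le (n : ℕ) {w : 𝔼 (n + 2)} (hw : w ≠ 0) (s : ℝ) :
    (volume : Measure (𝔼 (n + 2))).toSphere
        {ξ : sphere (0 : 𝔼 (n + 2)) 1 | |⟪w, (ξ : 𝔼 (n + 2))⟫_ℝ| ≤ s}
      ≤ ENNReal.ofReal (4000 * s / ‖w‖) :=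
  calc _ ≤ (n + 2 : ℝ≥0∞) * volume {x : 𝔼 (n + 2) | |x 0| ≤ s / ‖w‖ ∧ ‖x‖ < 1} := by
        simpa [add_assoc, one_add_one_eq_two] using
          toSphere_setOf_abs_inner_le_le_volume (n + 1) hw s
    _ ≤ (n + 2 : ℝ≥0∞) * (ENNReal.ofReal (2 * (s / ‖w‖)) * volume (ball (0 : 𝔼 (n + 1)) 1)) := by
        grw [volume_setOf_abs_zero_le_and_norm_lt_one_le (n + 1) (s / ‖w‖)]
    _ ≤ ENNReal.ofReal (2 * (s / ‖w‖)) * 2000 := by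
        rw [mul_left_comm]
        grw [add_two_mul_volume_ball_le n]
    _ = ENNReal.ofReal (4000 * s / ‖w‖) := by
        rw [← ENNReal.ofReal_ofNat 2000, ← ENNReal.ofReal_mul' (by norm_num)]
        ring_nf

lemma norm_cexp_two_pi_I_mul_mul (t a : ℝ) :
    ‖Complex.exp ((2 * π * Complex.I) * t * (a : ℂ))‖ = 1 := by
  rw [← Complex.norm_exp_ofReal_mul_I (2 * π * t * a)]
  push_cast
  ring_nf

lemma norm_integral_cexp_le (a : ℝ) {T : ℝ} (hT : 0 ≤ T) :
    ‖∫ t in (0:ℝ)..T, Complex.exp ((2 * π * Complex.I) * t * (a : ℂ))‖ ≤ T := by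
  simpa [abs_of_nonneg hT] using intervalIntegral.norm_integral_le_of_norm_le_const
    (a := 0) (b := T) (C := 1) fun t _ => (norm_cexp_two_pi_I_mul_mul t a).le

lemma norm_integral_cexp_le_inv (T : ℝ) {a : ℝ} (ha : a ≠ 0) :
    ‖∫ t in (0:ℝ)..T, Complex.exp ((2 * π * Complex.I) * t * (a : ℂ))‖ ≤ (π * |a|)⁻¹ := by
  have hc : 2 * π * Complex.I * a ≠ 0 := by simp [pi_ne_zero, ha]
  have hcomm : ∀ t : ℝ, (2 * π * Complex.I) * t * (a : ℂ) = (2 * π * Complex.I * a) * t :=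
    fun t => by ring
  simp_rw [hcomm]
  rw [integral_exp_mul_complex hc, norm_div]
  have hnorm : ‖2 * π * Complex.I * (a : ℂ)‖ = 2 * (π * |a|) := by
    simp [abs_of_pos pi_pos]; ring
  calc _ ≤ (1 + 1) / ‖2 * π * Complex.I * (a : ℂ)‖ := by
        gcongr
        refine (norm_sub_le _ _).trans_eq ?_
        simp_rw [← hcomm, norm_cexp_two_pi_I_mul_mul]
    _ = (π * |a|)⁻¹ := by rw [hnorm]; field_simp; norm_num

lemma continuous_integral_cexp (T : ℝ) :
    Continuous fun a : ℝ => ∫ t in (0:ℝ)..T, Complex.exp ((2 * π * Complex.I) * t * (a : ℂ)) :=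
  intervalIntegral.continuous_parametric_intervalIntegral_of_continuous'
    (by fun_prop) 0 T

lemma abs_le_of_lt_norm_integral_cexp_sq {T a t : ℝ} (ht : 0 < t)
    (h : t < ‖∫ s in (0:ℝ)..T, Complex.exp ((2 * π * Complex.I) * s * (a : ℂ))‖ ^ 2) :
    |a| ≤ (π * √t)⁻¹ := by
  by_contra! hlt
  have ha : 0 < |a| := lt_trans (by positivity) hlt
  have hdecay := norm_integral_cexp_le_inv T (abs_pos.mp ha)
  have : (π * |a|)⁻¹ < √t := by
    rw [mul_inv, inv_mul_lt_iff₀ pi_pos]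
    exact (inv_lt_comm₀ (by positivity) (by positivity)).mp hlt
  nlinarith [norm_nonneg (∫ s in (0:ℝ)..T, Complex.exp ((2 * π * Complex.I) * s * (a : ℂ))),
    sq_sqrt ht.le, sqrt_nonneg t]

lemma lintegral_Ioo_ofReal_div_sqrt {c M : ℝ} (hc : 0 ≤ c) (hM : 0 ≤ M) :
    ∫⁻ t in Set.Ioo 0 M, ENNReal.ofReal (c / √t) = ENNReal.ofReal (2 * c * √M) := by
  have hrpow : ∀ t ∈ Set.Ioo 0 M, c / √t = c * t ^ (-(1 / 2) : ℝ) := fun t ht => by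
    rw [rpow_neg ht.1.le, sqrt_eq_rpow, div_eq_mul_inv]
  have hint : IntegrableOn (fun t : ℝ => c * t ^ (-(1 / 2) : ℝ)) (Set.Ioc 0 M) := by
    simpa using ((intervalIntegral.intervalIntegrable_rpow' (a := 0) (b := M)
      (r := -(1 / 2)) (by norm_num)).const_mul c).1
  rw [setLIntegral_congr_fun measurableSet_Ioo (fun t ht => by rw [hrpow t ht]),
    ← ofReal_integral_eq_lintegral_ofReal (hint.mono_set Set.Ioo_subset_Ioc_self)
      (ae_restrict_of_forall_mem measurableSet_Ioo fun t ht =>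
        mul_nonneg hc (rpow_nonneg ht.1.le _)),
    ← integral_Ioc_eq_integral_Ioo, ← intervalIntegral.integral_of_le hM,
    intervalIntegral.integral_const_mul, integral_rpow (Or.inl (by norm_num)),
    zero_rpow (by norm_num), sqrt_eq_rpow]
  norm_num
  ring_nf

lemma integral_le_of_meas_lt_le_div_sqrt {α : Type*} [MeasurableSpace α] {μ : Measure α}
    {f : α → ℝ} {c M : ℝ} (hf : AEStronglyMeasurable f μ) (hf0 : ∀ x, 0 ≤ f x)
    (hfM : ∀ x, f x ≤ M) (hc : 0 ≤ c)
    (hdist : ∀ t ∈ Set.Ioo 0 M, μ {x | t < f x} ≤ ENNReal.ofReal (c / √t)) :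
    ∫ x, f x ∂μ ≤ 2 * c * √M := by
  rcases isEmpty_or_nonempty α with hα | ⟨⟨x₀⟩⟩
  · rw [integral_of_isEmpty]; positivity
  have hM : 0 ≤ M := (hf0 x₀).trans (hfM x₀)
  have hlayer : ∫⁻ t in Set.Ioi 0, μ {x | t < f x}
      ≤ ∫⁻ t in Set.Ioi 0, (Set.Ioo 0 M).indicator (fun t => ENNReal.ofReal (c / √t)) t := by
    refine setLIntegral_mono' measurableSet_Ioi fun t ht => ?_
    rcases lt_or_ge t M with htM | hMt
    · rw [Set.indicator_of_mem (Set.mem_Ioo.2 ⟨ht, htM⟩)]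
      exact hdist t ⟨ht, htM⟩
    · have hempty : {x | t < f x} = ∅ :=
        Set.eq_empty_of_forall_notMem fun x hx => (hx.trans_le (hfM x)).not_ge hMt
      simp [hempty]
  rw [lintegral_indicator measurableSet_Ioo, Measure.restrict_restrict measurableSet_Ioo,
    Set.inter_eq_self_of_subset_left Set.Ioo_subset_Ioi_self,
    lintegral_Ioo_ofReal_div_sqrt hc hM,
    ← lintegral_eq_lintegral_meas_lt μ (ae_of_all _ hf0) hf.aemeasurable] at hlayer
  rw [integral_eq_lintegral_of_nonneg_ae (ae_of_all _ hf0) hf]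
  exact ENNReal.toReal_le_of_le_ofReal (by positivity) hlayer

/-- there is `C' > 0` such that for all `d ≥ 2`, `T ≥ 2` and nonzero `k ∈ ℤ^d`,
`∫_{S^{d-1}} |∫_0^T e^{2πit(k·ξ)}dt|² dξ ≤ C' T / ‖k‖`. -/
theorem stmt_6 :
    ∃ C : ℝ, 0 < C ∧
      ∀ (d : ℕ), 2 ≤ d → ∀ T : ℝ, 2 ≤ T → ∀ k : Fin d → ℤ, k ≠ 0 →
        (∫ ξ : sphere (0 : EuclideanSpace ℝ (Fin d)) 1,
            ‖∫ t in (0:ℝ)..T,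
                Complex.exp ((2 * π * Complex.I) * t *
                  ((∑ i, (k i : ℝ) * (ξ : EuclideanSpace ℝ (Fin d)) i : ℝ) : ℂ))‖ ^ 2
          ∂((volume : Measure (EuclideanSpace ℝ (Fin d))).toSphere))
        ≤ C * T / ‖(show EuclideanSpace ℝ (Fin d) from WithLp.toLp 2 (fun i => (k i : ℝ)))‖ := by
  refine ⟨8000, by norm_num, fun d hd T hT k hk => ?_⟩
  obtain ⟨n, rfl⟩ : ∃ n, d = n + 2 := ⟨d - 2, by omega⟩
  set K : 𝔼 (n + 2) := WithLp.toLp 2 (fun i => (k i : ℝ))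
  have hK : K ≠ 0 := fun h => hk (funext fun i => by simpa [K] using congr($h i))
  have hsum : ∀ ξ : sphere (0 : 𝔼 (n + 2)) 1,
      ∑ i, (k i : ℝ) * (ξ : 𝔼 (n + 2)) i = ⟪K, ξ⟫_ℝ := fun ξ => by
    simp [K, PiLp.inner_apply, mul_comm]
  simp_rw [hsum]
  have hT0 : 0 ≤ T := by linarith
  calc _ ≤ 2 * (4000 / (π * ‖K‖)) * √(T ^ 2) :=
        integral_le_of_meas_lt_le_div_sqrt (c := 4000 / (π * ‖K‖))
          (((continuous_integral_cexp T).norm.pow 2).comp (by fun_prop)).aestronglyMeasurable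
          (fun ξ => sq_nonneg _)
          (fun ξ => pow_le_pow_left₀ (norm_nonneg _) (norm_integral_cexp_le _ hT0) 2)
          (by positivity)
          fun t ht => (measure_mono fun ξ hξ => abs_le_of_lt_norm_integral_cexp_sq ht.1 hξ).trans
            ((toSphere_setOf_abs_inner_le_le n hK _).trans_eq (by congr 1; field_simp))
    _ = 8000 * T / ‖K‖ / π := by
        rw [sqrt_sq hT0]
        field_simp
        ring
    _ ≤ 8000 * T / ‖K‖ := div_le_self (by positivity) (by linarith [pi_gt_three])
end

section
/- If ψ = Σ_{k ∈ Z², ‖k‖² = n} c_k e^{2πi k·x} with Σ |c_k|² = 1, then ∫_{T²} |ψ|⁴ dx = Σ_{m ∈ Z²} |Σ_{‖k‖²=‖m−k‖²=n} c_k c_{m−k}|² ≤ 3, using that for each m ∈ Z² there are at most 2 lattice points k with ‖k‖² = n and ‖m−k‖² = n when m ≠ 0. -/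
/-!
Writing `ψ = Σ_k c_k e_k` with characters `e_k(x) = exp(2πi k·x)`, the square `ψ²` is the
trigonometric polynomial with coefficients the autocorrelation `a_m = Σ_k c_k c_{m-k}`, so
Parseval gives `∫|ψ|⁴ = ∫|ψ²|² = Σ_m |a_m|²`. By Cauchy–Schwarz `|a_0|² ≤ (Σ|c_k|²)² = 1`.
For `m ≠ 0` the sum `a_m` runs over the lattice points on both circles `|k|² = n` and
`|m - k|² = n`, of which there are at most two, so `|a_m|² ≤ 2 Σ_k |c_k|²|c_{m-k}|²`; summed over
`m` these contribute at most `2 (Σ|c_k|²)² = 2`.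
-/

open MeasureTheory Real

/-- A fundamental domain for the torus `𝕋² = ℝ²/ℤ²`. -/
def torusBox2 : Set (Fin 2 → ℝ) := Set.Icc 0 1

open Finset
open scoped Pointwise

open Complex in
noncomputable def torusChar {d : ℕ} (k : Fin d → ℤ) (x : Fin d → ℝ) : ℂ :=
  exp (2 * π * I * ∑ i, (k i : ℂ) * (x i : ℂ))

section torusChar

variable {d : ℕ}

lemma torusChar_add (k l : Fin d → ℤ) (x : Fin d → ℝ) :
    torusChar (k + l) x = torusChar k x * torusChar l x := by
  simp only [torusChar, ← Complex.exp_add, Pi.add_apply, Int.cast_add, add_mul,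
    sum_add_distrib, mul_add]

lemma conj_torusChar (k : Fin d → ℤ) (x : Fin d → ℝ) :
    (starRingEnd ℂ) (torusChar k x) = torusChar (-k) x := by
  simp only [torusChar, ← Complex.exp_conj, map_mul, map_sum, map_ofNat, Complex.conj_ofReal,
    Complex.conj_I, map_intCast, Pi.neg_apply, Int.cast_neg, neg_mul, sum_neg_distrib]
  ring_nf

@[fun_prop]
lemma continuous_torusChar (k : Fin d → ℤ) : Continuous (torusChar k) := by
  unfold torusChar
  fun_prop

lemma integral_Icc_exp_two_pi_I_int_mul (j : ℤ) :
    ∫ t in Set.Icc (0 : ℝ) 1, Complex.exp (2 * π * Complex.I * (j * t)) =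
      if j = 0 then 1 else 0 := by
  rw [integral_Icc_eq_integral_Ioc, ← intervalIntegral.integral_of_le zero_le_one]
  split_ifs with hj
  · simp [hj]
  have hc : 2 * π * Complex.I * j ≠ 0 := by simp [Real.pi_ne_zero, hj]
  simp_rw [← mul_assoc]
  rw [integral_exp_mul_complex hc]
  have h1 : 2 * π * Complex.I * j * (1 : ℝ) = j * (2 * π * Complex.I) := by push_cast; ring
  rw [h1, Complex.exp_int_mul_two_pi_mul_I]
  simp

lemma integral_Icc_torusChar (k : Fin d → ℤ) :
    ∫ x in Set.Icc 0 1, torusChar k x = if k = 0 then 1 else 0 := by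
  have hprod : ∀ x, torusChar k x = ∏ i, Complex.exp (2 * π * Complex.I * (k i * x i)) := by
    intro x
    rw [torusChar, mul_sum, Complex.exp_sum]
  simp_rw [hprod, ← Set.pi_univ_Icc, Pi.zero_apply, Pi.one_apply, volume_pi,
    Measure.restrict_pi_pi]
  rw [integral_fintype_prod_eq_prod
    (f := fun i (t : ℝ) => Complex.exp (2 * π * Complex.I * (k i * t)))]
  simp only [integral_Icc_exp_two_pi_I_int_mul, Fintype.prod_boole]
  simp only [← funext_iff, Pi.zero_def]

lemma torusChar_sub (k l : Fin d → ℤ) (x : Fin d → ℝ) :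
    torusChar (k - l) x = torusChar k x * (starRingEnd ℂ) (torusChar l x) := by
  rw [conj_torusChar, sub_eq_add_neg, torusChar_add]

lemma integral_Icc_norm_sq_sum_torusChar (T : Finset (Fin d → ℤ)) (a : (Fin d → ℤ) → ℂ) :
    ∫ x in Set.Icc 0 1, ‖∑ m ∈ T, a m * torusChar m x‖ ^ 2 = ∑ m ∈ T, ‖a m‖ ^ 2 := by
  have hexpand : ∀ x, ((‖∑ m ∈ T, a m * torusChar m x‖ ^ 2 : ℝ) : ℂ) =
      ∑ m ∈ T, ∑ m' ∈ T, a m * (starRingEnd ℂ) (a m') * torusChar (m - m') x := by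
    intro x
    rw [Complex.ofReal_pow, ← Complex.mul_conj', map_sum, sum_mul_sum]
    refine sum_congr rfl fun m _ => sum_congr rfl fun m' _ => ?_
    rw [torusChar_sub, map_mul]
    ring
  have hint : ∀ m m' : Fin d → ℤ,
      Integrable (fun x => a m * (starRingEnd ℂ) (a m') * torusChar (m - m') x)
        (volume.restrict (Set.Icc 0 1)) := fun m m' =>
    ((continuous_torusChar _).continuousOn.integrableOn_compact isCompact_Icc).const_mul _
  apply Complex.ofReal_injective
  rw [← integral_complex_ofReal, integral_congr_ae (.of_forall hexpand),
    integral_finsetSum _ fun m _ => integrable_finsetSum _ fun m' _ => hint m m']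
  push_cast
  refine sum_congr rfl fun m hm => ?_
  simp_rw [integral_finsetSum _ fun m' _ => hint m m', integral_const_mul,
    integral_Icc_torusChar, sub_eq_zero, mul_ite, mul_one, mul_zero, sum_ite_eq, if_pos hm,
    Complex.mul_conj']

end torusChar

lemma sum_norm_sq_comp_le {α E : Type*} [DecidableEq α] [SeminormedAddGroup E] {S : Finset α}
    {c : α → E} (hS : ∀ k ∉ S, c k = 0) (A : Finset α) {f : α → α} (hf : Function.Injective f) :
    ∑ k ∈ A, ‖c (f k)‖ ^ 2 ≤ ∑ k ∈ S, ‖c k‖ ^ 2 := by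
  rw [← sum_image (f := fun j => ‖c j‖ ^ 2) hf.injOn,
    ← sum_filter_of_ne (p := (· ∈ S)) fun j _ hj => by by_contra h; simp [hS j h] at hj]
  exact sum_le_sum_of_subset_of_nonneg (fun j hj => (mem_filter.mp hj).2)
    fun _ _ _ => sq_nonneg _

section SelfConvolution

variable {G R : Type*} [AddCommGroup G] [CommSemiring R] {S : Finset G}

lemma tsum_mul_comp_sub_eq_sum [TopologicalSpace R] {c : G → R}
    (hS : ∀ k ∉ S, c k = 0) (m : G) : ∑' k, c k * c (m - k) = ∑ k ∈ S, c k * c (m - k) :=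
  tsum_eq_sum fun k hk => by rw [hS k hk, zero_mul]

variable [DecidableEq G]

lemma sum_add_mul_comp_sub {c : G → R} (hS : ∀ k ∉ S, c k = 0) {k : G}
    (hk : k ∈ S) (f : G → R) :
    ∑ m ∈ S + S, c (m - k) * f m = ∑ l ∈ S, c l * f (k + l) := by
  have hsub : S.image (k + ·) ⊆ S + S :=
    image_subset_iff.mpr fun l hl => add_mem_add hk hl
  have hzero : ∀ m ∈ S + S, m ∉ S.image (k + ·) → c (m - k) * f m = 0 := fun m _ hm => by
    rw [hS _ fun h => hm (mem_image.mpr ⟨m - k, h, add_sub_cancel k m⟩), zero_mul]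
  rw [← sum_subset hsub hzero, sum_image (add_right_injective k).injOn]
  simp_rw [add_sub_cancel_left]

lemma sq_sum_mul_eq_sum_add {c : G → R} (hS : ∀ k ∉ S, c k = 0) (e : G → R)
    (he : ∀ k l, e (k + l) = e k * e l) :
    (∑ k ∈ S, c k * e k) ^ 2 = ∑ m ∈ S + S, (∑ k ∈ S, c k * c (m - k)) * e m := by
  calc (∑ k ∈ S, c k * e k) ^ 2 = ∑ k ∈ S, c k * ∑ l ∈ S, c l * e (k + l) := by
        simp_rw [sq, sum_mul_sum, mul_sum, he]
        exact sum_congr rfl fun _ _ => sum_congr rfl fun _ _ => by ring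
    _ = ∑ k ∈ S, c k * ∑ m ∈ S + S, c (m - k) * e m :=
        sum_congr rfl fun k hk => by rw [sum_add_mul_comp_sub hS hk]
    _ = ∑ m ∈ S + S, (∑ k ∈ S, c k * c (m - k)) * e m := by
        simp_rw [mul_sum, sum_mul, mul_assoc]
        exact sum_comm

lemma sum_mul_comp_sub_eq_zero {c : G → R} (hS : ∀ k ∉ S, c k = 0) {m : G}
    (hm : m ∉ S + S) : ∑ k ∈ S, c k * c (m - k) = 0 :=
  sum_eq_zero fun k hk => by
    rw [hS (m - k) fun hmk => hm (by simpa using add_mem_add hk hmk), mul_zero]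

variable {E : Type*} [SeminormedRing E] {c : G → E}

lemma norm_sq_sum_mul_comp_sub_le (hS : ∀ k ∉ S, c k = 0) (m : G) :
    ‖∑ k ∈ S, c k * c (m - k)‖ ^ 2 ≤ (∑ k ∈ S, ‖c k‖ ^ 2) ^ 2 :=
  calc ‖∑ k ∈ S, c k * c (m - k)‖ ^ 2 ≤ (∑ k ∈ S, ‖c k‖ * ‖c (m - k)‖) ^ 2 := by
        gcongr
        exact norm_sum_le_of_le S fun k _ => norm_mul_le _ _
    _ ≤ (∑ k ∈ S, ‖c k‖ ^ 2) * ∑ k ∈ S, ‖c (m - k)‖ ^ 2 := sum_mul_sq_le_sq_mul_sq _ _ _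
    _ ≤ (∑ k ∈ S, ‖c k‖ ^ 2) ^ 2 := by
        rw [sq (∑ k ∈ S, _)]
        exact mul_le_mul_of_nonneg_left (sum_norm_sq_comp_le hS S sub_right_injective)
          (by positivity)

lemma norm_sq_sum_mul_comp_sub_le_card (hS : ∀ k ∉ S, c k = 0) {m : G} {N : ℕ}
    (hN : #{k ∈ S | m - k ∈ S} ≤ N) :
    ‖∑ k ∈ S, c k * c (m - k)‖ ^ 2 ≤ N * ∑ k ∈ S, ‖c k‖ ^ 2 * ‖c (m - k)‖ ^ 2 := by
  set K := {k ∈ S | m - k ∈ S}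
  have hK : ∑ k ∈ S, c k * c (m - k) = ∑ k ∈ K, c k * c (m - k) :=
    (sum_filter_of_ne fun k _ hk => by by_contra h; simp [hS _ h] at hk).symm
  calc ‖∑ k ∈ S, c k * c (m - k)‖ ^ 2 ≤ (∑ k ∈ K, ‖c k‖ * ‖c (m - k)‖) ^ 2 := by
        rw [hK]
        gcongr
        exact norm_sum_le_of_le K fun k _ => norm_mul_le _ _
    _ ≤ #K * ∑ k ∈ K, (‖c k‖ * ‖c (m - k)‖) ^ 2 := sq_sum_le_card_mul_sum_sq
    _ ≤ N * ∑ k ∈ S, ‖c k‖ ^ 2 * ‖c (m - k)‖ ^ 2 := by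
        simp_rw [mul_pow]
        gcongr
        exact filter_subset _ _

theorem sum_norm_sq_sum_mul_comp_sub_le (hS : ∀ k ∉ S, c k = 0) {N : ℕ}
    (hN : ∀ m ≠ 0, #{k ∈ S | m - k ∈ S} ≤ N) :
    ∑ m ∈ S + S, ‖∑ k ∈ S, c k * c (m - k)‖ ^ 2 ≤ (N + 1) * (∑ k ∈ S, ‖c k‖ ^ 2) ^ 2 := by
  set E := ∑ k ∈ S, ‖c k‖ ^ 2
  have hpoint : ∀ m, ‖∑ k ∈ S, c k * c (m - k)‖ ^ 2 ≤
      (if m = 0 then E ^ 2 else 0) + N * ∑ k ∈ S, ‖c k‖ ^ 2 * ‖c (m - k)‖ ^ 2 := fun m => by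
    split_ifs with hm
    · exact le_add_of_le_of_nonneg (norm_sq_sum_mul_comp_sub_le hS m) (by positivity)
    · rw [zero_add]
      exact norm_sq_sum_mul_comp_sub_le_card hS (hN m hm)
  calc ∑ m ∈ S + S, ‖∑ k ∈ S, c k * c (m - k)‖ ^ 2
      ≤ ∑ m ∈ S + S, ((if m = 0 then E ^ 2 else 0) +
          N * ∑ k ∈ S, ‖c k‖ ^ 2 * ‖c (m - k)‖ ^ 2) := sum_le_sum fun m _ => hpoint m
    _ = (if 0 ∈ S + S then E ^ 2 else 0) +
          N * ∑ k ∈ S, ‖c k‖ ^ 2 * ∑ m ∈ S + S, ‖c (m - k)‖ ^ 2 := by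
        rw [sum_add_distrib, sum_ite_eq', ← mul_sum, sum_comm]
        simp_rw [mul_sum]
    _ ≤ E ^ 2 + N * ∑ k ∈ S, ‖c k‖ ^ 2 * E := by
        gcongr with k
        · split_ifs
          exacts [le_rfl, by positivity]
        · exact sum_norm_sq_comp_le hS _ (sub_left_injective (b := k))
    _ = (N + 1) * E ^ 2 := by rw [← sum_mul]; ring

end SelfConvolution

lemma card_le_two_of_mem_circle_inter {R : Type*} [CommRing R] [LinearOrder R]
    [IsStrictOrderedRing R] {n : R} {m : Fin 2 → R} (hm : m ≠ 0) {s : Finset (Fin 2 → R)}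
    (hs : ∀ k ∈ s, k 0 ^ 2 + k 1 ^ 2 = n ∧ (m 0 - k 0) ^ 2 + (m 1 - k 1) ^ 2 = n) :
    #s ≤ 2 := by
  classical
  have hm2 : m 0 ^ 2 + m 1 ^ 2 ≠ 0 := by
    have : m 0 ≠ 0 ∨ m 1 ≠ 0 := by
      by_contra! h
      exact hm (funext fun i => by fin_cases i <;> simp [h.1, h.2])
    rcases this with h | h
    · exact (add_pos_of_pos_of_nonneg (by positivity) (sq_nonneg _)).ne'
    · exact (add_pos_of_nonneg_of_pos (sq_nonneg _) (by positivity)).ne'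
  have hdot : ∀ k ∈ s, 2 * (k 0 * m 0 + k 1 * m 1) = m 0 ^ 2 + m 1 ^ 2 := fun k hk => by
    linear_combination (hs k hk).1 - (hs k hk).2
  -- The points of `s` lie on a line orthogonal to `m`, so the coordinate along that line
  -- determines them, and by Lagrange's identity its square is the same for all of them.
  set f : (Fin 2 → R) → R := fun k => m 0 * k 1 - m 1 * k 0 with hf
  have hinj : Set.InjOn f s := by
    intro k hk l hl hkl
    have hkl' : m 0 * (k 1 - l 1) - m 1 * (k 0 - l 0) = 0 := by
      simp only [hf] at hkl; linear_combination hkl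
    have horth : (k 0 - l 0) * m 0 + (k 1 - l 1) * m 1 = 0 := by
      linarith [hdot k hk, hdot l hl]
    have h0 : (k 0 - l 0) * (m 0 ^ 2 + m 1 ^ 2) = 0 := by
      linear_combination m 0 * horth - m 1 * hkl'
    have h1 : (k 1 - l 1) * (m 0 ^ 2 + m 1 ^ 2) = 0 := by
      linear_combination m 1 * horth + m 0 * hkl'
    funext i
    fin_cases i
    · exact sub_eq_zero.mp ((mul_eq_zero.mp h0).resolve_right hm2)
    · exact sub_eq_zero.mp ((mul_eq_zero.mp h1).resolve_right hm2)
  have hsq : ∀ k ∈ s, 4 * f k ^ 2 = 4 * (m 0 ^ 2 + m 1 ^ 2) * n - (m 0 ^ 2 + m 1 ^ 2) ^ 2 :=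
    fun k hk => by
      linear_combination 4 * (m 0 ^ 2 + m 1 ^ 2) * (hs k hk).1
        - (2 * (k 0 * m 0 + k 1 * m 1) + (m 0 ^ 2 + m 1 ^ 2)) * hdot k hk
  obtain rfl | ⟨k₀, hk₀⟩ := s.eq_empty_or_nonempty
  · simp
  have hmaps : Set.MapsTo f s ({f k₀, -f k₀} : Finset R) := fun k hk => by
    have : f k ^ 2 = f k₀ ^ 2 :=
      mul_left_cancel₀ four_ne_zero ((hsq k hk).trans (hsq k₀ hk₀).symm)
    simpa using sq_eq_sq_iff_eq_or_eq_neg.mp this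
  exact (card_le_card_of_injOn f hmaps hinj).trans card_le_two

lemma ite_mem_circle_inter_mul_eq {M₀ : Type*} [MulZeroClass M₀] {n : ℤ} {c : (Fin 2 → ℤ) → M₀}
    (hsupp : ∀ k, c k ≠ 0 → k 0 ^ 2 + k 1 ^ 2 = n) (m k : Fin 2 → ℤ) :
    (if k 0 ^ 2 + k 1 ^ 2 = n ∧ (m 0 - k 0) ^ 2 + (m 1 - k 1) ^ 2 = n then c k * c (m - k)
      else 0) = c k * c (m - k) := by
  refine ite_eq_left_iff.mpr fun hcirc => ?_
  by_contra hne
  exact hcirc ⟨hsupp k (left_ne_zero_of_mul (Ne.symm hne)),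
    by simpa using hsupp (m - k) (right_ne_zero_of_mul (Ne.symm hne))⟩

/-- if `ψ = Σ_{‖k‖²=n} c_k e^{2πik·x}` with `Σ|c_k|² = 1`, then
`∫_{𝕋²}|ψ|⁴ = Σ_m |Σ_{‖k‖²=‖m−k‖²=n} c_k c_{m−k}|² ≤ 3`. -/
theorem stmt_14 (n : ℤ) (c : (Fin 2 → ℤ) → ℂ)
    (hfin : (Function.support c).Finite)
    (hsupp : ∀ k : Fin 2 → ℤ, c k ≠ 0 → (k 0) ^ 2 + (k 1) ^ 2 = n)
    (hnorm : (∑' k : Fin 2 → ℤ, ‖c k‖ ^ 2) = 1)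
    (ψ : (Fin 2 → ℝ) → ℂ)
    (hψ : ∀ x, ψ x = ∑' k : Fin 2 → ℤ,
      c k * Complex.exp ((2 * π * Complex.I) * ((k 0 : ℂ) * (x 0 : ℂ) + (k 1 : ℂ) * (x 1 : ℂ)))) :
    (∫ x in torusBox2, ‖ψ x‖ ^ 4)
        = (∑' m : Fin 2 → ℤ,
            ‖∑' k : Fin 2 → ℤ,
                (if (k 0) ^ 2 + (k 1) ^ 2 = n ∧ (m 0 - k 0) ^ 2 + (m 1 - k 1) ^ 2 = n then
                  c k * c (m - k) else 0)‖ ^ 2) ∧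
      (∑' m : Fin 2 → ℤ,
          ‖∑' k : Fin 2 → ℤ,
              (if (k 0) ^ 2 + (k 1) ^ 2 = n ∧ (m 0 - k 0) ^ 2 + (m 1 - k 1) ^ 2 = n then
                c k * c (m - k) else 0)‖ ^ 2) ≤ 3 := by
  set S := hfin.toFinset
  have hS : ∀ k ∉ S, c k = 0 := fun k hk => by simpa [S] using hk
  have hcirc : ∀ k ∈ S, k 0 ^ 2 + k 1 ^ 2 = n := fun k hk => hsupp k (by simpa [S] using hk)
  have hsq : ∀ x, ψ x ^ 2 = ∑ m ∈ S + S, (∑ k ∈ S, c k * c (m - k)) * torusChar m x := fun x => by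
    rw [hψ x, tsum_eq_sum fun k hk => by rw [hS k hk, zero_mul],
      ← sq_sum_mul_eq_sum_add hS (torusChar · x) fun k l => torusChar_add k l x]
    simp only [torusChar, Fin.sum_univ_two]
  have hsum : (∑' m : Fin 2 → ℤ, ‖∑' k : Fin 2 → ℤ,
      (if (k 0) ^ 2 + (k 1) ^ 2 = n ∧ (m 0 - k 0) ^ 2 + (m 1 - k 1) ^ 2 = n then
        c k * c (m - k) else 0)‖ ^ 2) = ∑ m ∈ S + S, ‖∑ k ∈ S, c k * c (m - k)‖ ^ 2 := by
    simp_rw [ite_mem_circle_inter_mul_eq hsupp, tsum_mul_comp_sub_eq_sum hS]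
    exact tsum_eq_sum fun m hm => by simp [sum_mul_comp_sub_eq_zero hS hm]
  have hcard : ∀ m ≠ 0, #{k ∈ S | m - k ∈ S} ≤ 2 := fun m hm =>
    card_le_two_of_mem_circle_inter hm fun k hk => by
      obtain ⟨hk, hmk⟩ := mem_filter.mp hk
      exact ⟨hcirc k hk, by simpa using hcirc (m - k) hmk⟩
  have hnormS : ∑ k ∈ S, ‖c k‖ ^ 2 = 1 := by
    rw [← hnorm, tsum_eq_sum fun k hk => by simp [hS k hk]]
  refine ⟨?_, hsum ▸ ?_⟩
  · calc ∫ x in torusBox2, ‖ψ x‖ ^ 4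
        = ∫ x in Set.Icc 0 1, ‖∑ m ∈ S + S, (∑ k ∈ S, c k * c (m - k)) * torusChar m x‖ ^ 2 := by
          simp_rw [← hsq, norm_pow, ← pow_mul]
          rfl
      _ = _ := by rw [integral_Icc_norm_sq_sum_torusChar, hsum]
  · calc ∑ m ∈ S + S, ‖∑ k ∈ S, c k * c (m - k)‖ ^ 2 ≤ (2 + 1) * (∑ k ∈ S, ‖c k‖ ^ 2) ^ 2 := by
          exact_mod_cast sum_norm_sq_sum_mul_comp_sub_le hS hcard
      _ = 3 := by norm_num [hnormS]
end
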